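/- Let q = 2, c ≥ 1, f, g continuous nondecreasing with f positive. If φ is a C² solution of φ'' + ((c-1)/r)φ' = f(φ) + g(φ)(φ')² on [0,R) with φ(0)=a, φ'(0)=0, then for all r ∈ [0,R): φ'(r) ≤ ( 2 ∫_a^{φ(r)} exp(2∫_t^{φ(r)} g⁺(s) ds) f(t) dt )^{1/2}. -/

import Mathlib

/-!
Write `ψ = φ'` and `k = g⁺`. On `[0, r₀]`, `f(φ)` has a positive lower bound and `g(φ)` is
bounded, so the equation forces `ψ' > 0` wherever `ψ` equals a small enough negative number; as
`ψ → 0` at `0`, it never becomes negative. Then `ψ' ≤ f(φ) + k(φ) ψ²`, and with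
`G(u) = ∫ₐᵘ k` the energy `e^{-2G(φ)} ψ² - 2 ∫ₐ^φ e^{-2G} f` has derivative
`2 e^{-2G(φ)} ψ (ψ' - k(φ) ψ² - f(φ)) ≤ 0`. It tends to `0` as `r → 0`, hence is nonpositive,
which after multiplying by `e^{2G(φ)}` is the squared claim.
-/

open Real MeasureTheory Set Filter Topology

theorem nonneg_of_deriv_pos_of_eq_neg {ψ ψ' : ℝ → ℝ} {a b : ℝ}
    (hψ : ∀ x ∈ Ioc a b, HasDerivAt ψ (ψ' x) x) (hlim : Tendsto ψ (𝓝[>] a) (𝓝 0))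
    (hpush : ∀ᶠ m in 𝓝[>] (0 : ℝ), ∀ x ∈ Ioc a b, ψ x = -m → 0 < ψ' x) :
    ∀ x ∈ Ioc a b, 0 ≤ ψ x := by
  intro x hx
  have hbarrier : ∀ᶠ m in 𝓝[>] (0 : ℝ), -m ≤ ψ x := by
    filter_upwards [hpush, self_mem_nhdsWithin] with m hm (hm0 : 0 < m)
    obtain ⟨x₀, hx₀ψ, hx₀⟩ : ∃ x₀, -m < ψ x₀ ∧ x₀ ∈ Ioo a x :=
      ((hlim.eventually (lt_mem_nhds (neg_neg_of_pos hm0))).and (Ioo_mem_nhdsGT hx.1)).exists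
    have hsub : Icc x₀ x ⊆ Ioc a b := Icc_subset_Ioc hx₀.1 hx.2
    have hsub' : Ico x₀ x ⊆ Ioc a b := Ico_subset_Icc_self.trans hsub
    have hfence := image_le_of_deriv_right_lt_deriv_boundary (f := fun y => -ψ y)
      (f' := fun y => -ψ' y) (B := fun _ => m) (B' := fun _ => 0)
      (fun y hy => (hψ y (hsub hy)).continuousAt.neg.continuousWithinAt)
      (fun y hy => (hψ y (hsub' hy)).neg.hasDerivWithinAt) (by linarith)
      (fun _ => hasDerivAt_const _ _)
      (fun y hy hy' => neg_neg_of_pos (hm y (hsub' hy) (by linarith))) ⟨hx₀.2.le, le_rfl⟩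
    linarith
  have hneg : Tendsto (fun m : ℝ => -m) (𝓝[>] 0) (𝓝 0) := by
    simpa using (tendsto_neg (0 : ℝ)).mono_left nhdsWithin_le_nhds
  exact le_of_tendsto hneg hbarrier

theorem AntitoneOn.le_of_tendsto_nhdsGT {E : ℝ → ℝ} {l r L : ℝ} (hE : AntitoneOn E (Ioo l r))
    (hlim : Tendsto E (𝓝[>] l) (𝓝 L)) : ∀ x ∈ Ioo l r, E x ≤ L := fun x hx =>
  ge_of_tendsto hlim (by
    filter_upwards [Ioo_mem_nhdsGT hx.1] with y hy
    exact hE ⟨hy.1, hy.2.trans hx.2⟩ hx hy.2.le)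

/-- Holds also when `f` is not differentiable at `a`, through the junk value of `deriv`. -/
theorem deriv_eq_zero_of_tendsto_deriv_nhdsGT {f : ℝ → ℝ} {s : Set ℝ} {a : ℝ}
    (hdiff : DifferentiableOn ℝ f s) (hcont : ContinuousWithinAt f s a) (hs : s ∈ 𝓝[>] a)
    (hlim : Tendsto (deriv f) (𝓝[>] a) (𝓝 0)) : deriv f a = 0 := by
  by_cases h : DifferentiableAt ℝ f a
  · exact (uniqueDiffWithinAt_Ici a).eq_deriv _ h.hasDerivAt.hasDerivWithinAt
      (hasDerivWithinAt_Ici_of_tendsto_deriv hdiff hcont hs hlim)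
  · exact deriv_zero_of_not_differentiableAt h

noncomputable def integratingFactor (k : ℝ → ℝ) (a u : ℝ) : ℝ := exp (-2 * ∫ s in a..u, k s)

noncomputable def energy (k f : ℝ → ℝ) (a u v : ℝ) : ℝ :=
  integratingFactor k a u * v ^ 2 - 2 * ∫ t in a..u, integratingFactor k a t * f t

section Energy

variable {k f : ℝ → ℝ} {a : ℝ}

theorem hasDerivAt_integratingFactor (hk : Continuous k) (u : ℝ) :
    HasDerivAt (integratingFactor k a) (-2 * k u * integratingFactor k a u) u := by
  rw [mul_comm]
  exact ((hk.integral_hasStrictDerivAt a u).hasDerivAt.const_mul (-2)).exp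

theorem integratingFactor_pos (k : ℝ → ℝ) (a u : ℝ) : 0 < integratingFactor k a u := exp_pos _

theorem continuous_integratingFactor (hk : Continuous k) : Continuous (integratingFactor k a) :=
  continuous_iff_continuousAt.2 fun u => (hasDerivAt_integratingFactor hk u).continuousAt

theorem HasDerivAt.energy_comp {φ ψ : ℝ → ℝ} {φ' ψ' r : ℝ} (hk : Continuous k)
    (hf : Continuous f) (hφ : HasDerivAt φ φ' r) (hψ : HasDerivAt ψ ψ' r) :
    HasDerivAt (fun x => energy k f a (φ x) (ψ x))
      (2 * integratingFactor k a (φ r) * (ψ r * ψ' - φ' * (k (φ r) * ψ r ^ 2 + f (φ r)))) r := by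
  have hF := ((((continuous_integratingFactor (a := a) hk).mul hf).integral_hasStrictDerivAt a
    (φ r)).hasDerivAt.comp r hφ).const_mul 2
  refine ((((hasDerivAt_integratingFactor hk (φ r)).comp r hφ).mul (hψ.pow 2)).sub
    hF).congr_deriv ?_
  simp only [Pi.mul_apply, Pi.pow_apply, Function.comp_apply]
  ring

theorem antitoneOn_energy_comp {φ ψ ψ' : ℝ → ℝ} {s : Set ℝ} (hk : Continuous k)
    (hf : Continuous f) (hs : IsOpen s) (hs' : Convex ℝ s)
    (hφ : ∀ x ∈ s, HasDerivAt φ (ψ x) x) (hψ : ∀ x ∈ s, HasDerivAt ψ (ψ' x) x)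
    (hψnn : ∀ x ∈ s, 0 ≤ ψ x) (hψ' : ∀ x ∈ s, ψ' x ≤ f (φ x) + k (φ x) * ψ x ^ 2) :
    AntitoneOn (fun x => energy k f a (φ x) (ψ x)) s := by
  have hE x (hx : x ∈ s) := (hφ x hx).energy_comp (a := a) hk hf (hψ x hx)
  refine antitoneOn_of_hasDerivWithinAt_nonpos hs'
    (fun x hx => (hE x hx).continuousAt.continuousWithinAt)
    (fun x hx => (hE x (interior_subset hx)).hasDerivWithinAt) fun x hx => ?_
  rw [hs.interior_eq] at hx
  have hbracket : ψ x * ψ' x - ψ x * (k (φ x) * ψ x ^ 2 + f (φ x)) ≤ 0 := by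
    nlinarith [mul_le_mul_of_nonneg_left (hψ' x hx) (hψnn x hx)]
  exact mul_nonpos_of_nonneg_of_nonpos (by have := integratingFactor_pos k a (φ x); positivity)
    hbracket

theorem tendsto_energy_comp {α : Type*} {l : Filter α} {φ ψ : α → ℝ} (hk : Continuous k)
    (hf : Continuous f) (hφ : Tendsto φ l (𝓝 a)) (hψ : Tendsto ψ l (𝓝 0)) :
    Tendsto (fun x => energy k f a (φ x) (ψ x)) l (𝓝 0) := by
  have hF := (((continuous_integratingFactor (a := a) hk).mul hf).integral_hasStrictDerivAt a
    a).hasDerivAt.continuousAt.tendsto.comp hφ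
  have := (((continuous_integratingFactor (a := a) hk).tendsto a).comp hφ).mul (hψ.pow 2) |>.sub
    (hF.const_mul 2)
  simpa [energy] using this

theorem integral_exp_integral_mul_eq (hk : Continuous k) (u : ℝ) :
    ∫ t in a..u, exp (2 * ∫ s in t..u, k s) * f t =
      (integratingFactor k a u)⁻¹ * ∫ t in a..u, integratingFactor k a t * f t := by
  rw [← intervalIntegral.integral_const_mul]
  refine intervalIntegral.integral_congr fun t _ => ?_
  simp only [integratingFactor, ← exp_neg, ← mul_assoc, ← exp_add,
    ← intervalIntegral.integral_interval_sub_left (hk.intervalIntegrable a u)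
      (hk.intervalIntegrable a t)]
  ring_nf

theorem sq_le_of_energy_nonpos (hk : Continuous k) {u v : ℝ} (h : energy k f a u v ≤ 0) :
    v ^ 2 ≤ 2 * ∫ t in a..u, exp (2 * ∫ s in t..u, k s) * f t := by
  rw [integral_exp_integral_mul_eq hk, mul_left_comm,
    le_inv_mul_iff₀ (integratingFactor_pos k a u)]
  unfold energy at h
  linarith

end Energy

theorem le_of_radial_ode {c r ψ ψ' F G : ℝ} (hc : 1 ≤ c) (hr : 0 < r) (hψ : 0 ≤ ψ)
    (h : ψ' + (c - 1) / r * ψ = F + G * ψ ^ 2) : ψ' ≤ F + max G 0 * ψ ^ 2 := by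
  have hdrift : 0 ≤ (c - 1) / r * ψ := by have := sub_nonneg.2 hc; positivity
  nlinarith [mul_le_mul_of_nonneg_right (le_max_left G 0) (sq_nonneg ψ)]

theorem nonneg_of_radial_ode {c R : ℝ} {f g φ ψ ψ' : ℝ → ℝ} (hc : 1 ≤ c) (hf : Continuous f)
    (hfpos : ∀ t, 0 < f t) (hg : Continuous g) (hφ : ContinuousOn φ (Ico 0 R))
    (hψ : ∀ r ∈ Ioo 0 R, HasDerivAt ψ (ψ' r) r) (hψ0 : Tendsto ψ (𝓝[>] 0) (𝓝 0))
    (hode : ∀ r ∈ Ioo 0 R, ψ' r + (c - 1) / r * ψ r = f (φ r) + g (φ r) * ψ r ^ 2) :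
    ∀ r ∈ Ioo 0 R, 0 ≤ ψ r := by
  intro r₀ hr₀
  have hK : Icc 0 r₀ ⊆ Ico 0 R := Icc_subset_Ico_right hr₀.2
  have hIoc : Ioc 0 r₀ ⊆ Ioo 0 R := Ioc_subset_Ioo_right hr₀.2
  obtain ⟨x₀, -, hx₀⟩ := isCompact_Icc.exists_isMinOn (nonempty_Icc.2 hr₀.1.le)
    (hf.comp_continuousOn (hφ.mono hK))
  obtain ⟨M, hM⟩ := isCompact_Icc.bddBelow_image (hg.comp_continuousOn (hφ.mono hK))
  have hsmall : ∀ᶠ m in 𝓝[>] (0 : ℝ), 0 < f (φ x₀) + M * m ^ 2 := by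
    have hlim : Tendsto (fun m : ℝ => f (φ x₀) + M * m ^ 2) (𝓝 0) (𝓝 (f (φ x₀))) := by
      have : Continuous fun m : ℝ => f (φ x₀) + M * m ^ 2 := by fun_prop
      simpa using this.tendsto 0
    exact nhdsWithin_le_nhds (hlim.eventually_const_lt (hfpos _))
  refine nonneg_of_deriv_pos_of_eq_neg (fun x hx => hψ x (hIoc hx)) hψ0 ?_ r₀ ⟨hr₀.1, le_rfl⟩
  filter_upwards [hsmall, self_mem_nhdsWithin] with m hm (hm0 : 0 < m) x hx hψx
  have hfx : f (φ x₀) ≤ f (φ x) := hx₀ (Ioc_subset_Icc_self hx)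
  have hgx : M ≤ g (φ x) := hM ⟨x, Ioc_subset_Icc_self hx, rfl⟩
  have hdrift : 0 ≤ (c - 1) / x * m := by have := hx.1; positivity
  have hodex := hode x (hIoc hx)
  rw [hψx] at hodex
  nlinarith [mul_le_mul_of_nonneg_right hgx (sq_nonneg m)]

theorem stmt5_general (c R a : ℝ) (hc : 1 ≤ c) (hR : 0 < R)
    (f g φ : ℝ → ℝ)
    (hf : Continuous f) (hfpos : ∀ t, 0 < f t)
    (hg : Continuous g)
    (hφc : ContinuousOn φ (Set.Ico 0 R))
    (hφ2 : ContDiffOn ℝ 2 φ (Set.Ioo 0 R))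
    (hφa : φ 0 = a)
    (hd0 : Filter.Tendsto (deriv φ) (nhdsWithin 0 (Set.Ioi 0)) (nhds 0))
    (hode : ∀ r ∈ Set.Ioo 0 R,
      deriv (deriv φ) r + (c - 1) / r * deriv φ r = f (φ r) + g (φ r) * (deriv φ r) ^ 2) :
    ∀ r ∈ Set.Ico 0 R,
      deriv φ r ≤
        (2 * ∫ t in a..φ r, Real.exp (2 * ∫ s in t..φ r, max (g s) 0) * f t) ^ ((1 : ℝ) / 2) := by
  have hφd : DifferentiableOn ℝ φ (Ioo 0 R) := hφ2.differentiableOn (by norm_num)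
  have hφ' : ∀ r ∈ Ioo 0 R, HasDerivAt φ (deriv φ r) r := fun r hr =>
    (hφd.differentiableAt (isOpen_Ioo.mem_nhds hr)).hasDerivAt
  have hψd : DifferentiableOn ℝ (deriv φ) (Ioo 0 R) :=
    (hφ2.deriv_of_isOpen isOpen_Ioo (m := 1) (by norm_num)).differentiableOn one_ne_zero
  have hψ' : ∀ r ∈ Ioo 0 R, HasDerivAt (deriv φ) (deriv (deriv φ) r) r := fun r hr =>
    (hψd.differentiableAt (isOpen_Ioo.mem_nhds hr)).hasDerivAt
  have hφ0 : ContinuousWithinAt φ (Ioo 0 R) 0 := (hφc 0 ⟨le_rfl, hR⟩).mono Ioo_subset_Ico_self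
  have hψ0 : deriv φ 0 = 0 :=
    deriv_eq_zero_of_tendsto_deriv_nhdsGT hφd hφ0 (Ioo_mem_nhdsGT hR) hd0
  have hψnn := nonneg_of_radial_ode hc hf hfpos hg hφc hψ' hd0 hode
  have hgp : Continuous fun s => max (g s) 0 := hg.max continuous_const
  have hanti := antitoneOn_energy_comp (a := a) hgp hf isOpen_Ioo (convex_Ioo 0 R) hφ' hψ' hψnn
    fun r hr => le_of_radial_ode hc hr.1 (hψnn r hr) (hode r hr)
  have hφlim : Tendsto φ (𝓝[>] 0) (𝓝 a) := by
    rw [← nhdsWithin_Ioo_eq_nhdsGT hR, ← hφa]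
    exact hφ0
  have hlim := tendsto_energy_comp hgp hf hφlim hd0
  have hsq : ∀ r ∈ Ico 0 R,
      deriv φ r ^ 2 ≤ 2 * ∫ t in a..φ r, exp (2 * ∫ s in t..φ r, max (g s) 0) * f t := by
    rintro r ⟨hr0, hrR⟩
    rcases hr0.eq_or_lt with rfl | hr
    · simp [hψ0, hφa]
    · exact sq_le_of_energy_nonpos hgp (hanti.le_of_tendsto_nhdsGT hlim r ⟨hr, hrR⟩)
  intro r hr
  rw [← sqrt_eq_rpow]
  exact (le_abs_self _).trans (abs_le_sqrt (hsq r hr))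

theorem stmt5 (c R a : ℝ) (hc : 1 ≤ c) (hR : 0 < R)
    (f g φ : ℝ → ℝ)
    (hf : Continuous f) (hfpos : ∀ t, 0 < f t) (hfmono : Monotone f)
    (hg : Continuous g) (hgmono : Monotone g)
    (hφc : ContinuousOn φ (Set.Ico 0 R))
    (hφ2 : ContDiffOn ℝ 2 φ (Set.Ioo 0 R))
    (hφa : φ 0 = a)
    (hd0 : Filter.Tendsto (deriv φ) (nhdsWithin 0 (Set.Ioi 0)) (nhds 0))
    (hd2 : ∃ L, Filter.Tendsto (deriv (deriv φ)) (nhdsWithin 0 (Set.Ioi 0)) (nhds L))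
    (hode : ∀ r ∈ Set.Ioo 0 R,
      deriv (deriv φ) r + (c - 1) / r * deriv φ r = f (φ r) + g (φ r) * (deriv φ r) ^ 2) :
    ∀ r ∈ Set.Ico 0 R,
      deriv φ r ≤
        (2 * ∫ t in a..φ r, Real.exp (2 * ∫ s in t..φ r, max (g s) 0) * f t) ^ ((1 : ℝ) / 2) :=
  stmt5_general c R a hc hR f g φ hf hfpos hg hφc hφ2 hφa hd0 hode
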